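/- Let V_1,...,V_n be isometries with orthogonal ranges on a Hilbert space K, W : E → K a bounded operator, and define F(z) := W*(I + ∑ z_i V_i*)(I - ∑ z_i V_i*)^{-1} W for z ∈ B_n. Then for any finite set of points w_1,...,w_m ∈ B_n and vectors h_1,...,h_m ∈ E, the matrix [(F(w_i) + F(w_j)*)/(1 - ⟨w_i, w_j⟩)]_{i,j} is positive semidefinite, i.e., ∑_{i,j} ⟨(F(w_i) + F(w_j)*)/(1 - ⟨w_i,w_j⟩) h_j, h_i⟩ ≥ 0. -/

import Mathlib

open ContinuousLinearMap

open scoped InnerProductSpace ComplexConjugate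

/-!
Write `T z = ∑ zᵢ Vᵢ*`. The relations `Vᵢ* Vⱼ = δᵢⱼ` give `T z (T z')* = ⟨z, z'⟩ I`, so by the
C*-identity `‖T z‖ < 1` on the ball and `F` is well defined. Cayley transforms satisfy the
ring identity `(1 + t)(1 - t)⁻¹ + (1 - s)⁻¹(1 + s) = 2 (1 - t)⁻¹ (1 - t s) (1 - s)⁻¹`;
with `t = T wᵢ`, `s = (T wⱼ)*` the middle factor is the scalar `1 - ⟨wᵢ, wⱼ⟩`, which cancels the
denominator. Hence the `(i, j)` term is `2 ⟨gᵢ, gⱼ⟩` with `gᵢ = (1 - (T wᵢ)*)⁻¹ W hᵢ`, and the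
whole sum is `2 ‖∑ gᵢ‖²`.
-/

section CayleyTransform

variable {R : Type*} [Ring R]

lemma inverse_one_sub_add_inverse_one_sub {t s : R} (ht : IsUnit (1 - t)) (hs : IsUnit (1 - s)) :
    Ring.inverse (1 - t) + Ring.inverse (1 - s) - 1 =
      Ring.inverse (1 - t) * (1 - t * s) * Ring.inverse (1 - s) := by
  set a := Ring.inverse (1 - t)
  set b := Ring.inverse (1 - s)
  have ha : a * (1 - t) = 1 := Ring.inverse_mul_cancel _ ht
  have hb : (1 - s) * b = 1 := Ring.mul_inverse_cancel _ hs
  calc a + b - 1 = a * (1 - t) * b + a * ((1 - s) * b) - a * (1 - t) * ((1 - s) * b) := by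
        rw [ha, hb, one_mul, mul_one, mul_one, add_comm a]
    _ = a * ((1 - t) + (1 - s) - (1 - t) * (1 - s)) * b := by noncomm_ring
    _ = a * (1 - t * s) * b := by congr 2; noncomm_ring

lemma one_add_mul_inverse_add_inverse_mul_one_add {t s : R} (ht : IsUnit (1 - t))
    (hs : IsUnit (1 - s)) :
    (1 + t) * Ring.inverse (1 - t) + Ring.inverse (1 - s) * (1 + s) =
      2 * (Ring.inverse (1 - t) * (1 - t * s) * Ring.inverse (1 - s)) := by
  have ht' : (1 - t) * Ring.inverse (1 - t) = 1 := Ring.mul_inverse_cancel _ ht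
  have hs' : Ring.inverse (1 - s) * (1 - s) = 1 := Ring.inverse_mul_cancel _ hs
  rw [← inverse_one_sub_add_inverse_one_sub ht hs,
    show 1 + t = 2 - (1 - t) by rw [← one_add_one_eq_two]; abel,
    show 1 + s = 2 - (1 - s) by rw [← one_add_one_eq_two]; abel,
    sub_mul, mul_sub, ht', hs']
  noncomm_ring

end CayleyTransform

lemma norm_sum_mul_conj_lt_one {ι : Type*} [Fintype ι] {z z' : ι → ℂ}
    (hz : ∑ l, ‖z l‖ ^ 2 < 1) (hz' : ∑ l, ‖z' l‖ ^ 2 < 1) :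
    ‖∑ l, z l * conj (z' l)‖ < 1 := by
  have norm_lt_one : ∀ x : ι → ℂ, ∑ l, ‖x l‖ ^ 2 < 1 → ‖WithLp.toLp 2 x‖ < 1 := fun x hx =>
    (sq_lt_one_iff₀ (norm_nonneg _)).1 (by rwa [EuclideanSpace.norm_sq_eq])
  have : ∑ l, z l * conj (z' l) = ⟪WithLp.toLp 2 z', WithLp.toLp 2 z⟫_ℂ := by
    simp [EuclideanSpace.inner_eq_star_dotProduct, dotProduct]
  rw [this]
  calc _ ≤ ‖WithLp.toLp 2 z'‖ * ‖WithLp.toLp 2 z‖ := norm_inner_le_norm _ _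
    _ < 1 := mul_lt_one_of_nonneg_of_lt_one_left (norm_nonneg _) (norm_lt_one z' hz')
        (norm_lt_one z hz).le

lemma sum_sum_inner_eq_norm_sum_sq {E ι : Type*} [NormedAddCommGroup E] [InnerProductSpace ℂ E]
    [Fintype ι] (g : ι → E) :
    ∑ i, ∑ j, ⟪g i, g j⟫_ℂ = (‖∑ i, g i‖ ^ 2 : ℝ) := by
  simp_rw [← inner_sum, ← sum_inner]
  push_cast
  exact inner_self_eq_norm_sq_to_K _

section Operators

variable {E : Type*} {K : Type*} [NormedAddCommGroup E] [InnerProductSpace ℂ E] [CompleteSpace E]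
  [NormedAddCommGroup K] [InnerProductSpace ℂ K] [CompleteSpace K]

lemma adjoint_inverse_one_sub (t : K →L[ℂ] K) :
    adjoint (Ring.inverse (1 - t)) = Ring.inverse (1 - adjoint t) := by
  rw [← star_eq_adjoint, ← Ring.inverse_star, star_sub, star_one, star_eq_adjoint]

lemma adjoint_cayley (t : K →L[ℂ] K) :
    adjoint ((1 + t) * Ring.inverse (1 - t)) = Ring.inverse (1 - adjoint t) * (1 + adjoint t) := by
  rw [← star_eq_adjoint, star_mul, star_eq_adjoint, adjoint_inverse_one_sub, star_add, star_one,
    star_eq_adjoint]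

lemma inner_compression_cayley_add_adjoint_compression_cayley (W : E →L[ℂ] K)
    {t s : K →L[ℂ] K} {c : ℂ} (hts : t * adjoint s = c • 1) (ht : IsUnit (1 - t))
    (hs : IsUnit (1 - adjoint s)) (x y : E) :
    ⟪x, ((adjoint W).comp (((1 + t) * Ring.inverse (1 - t)).comp W) +
        adjoint ((adjoint W).comp (((1 + s) * Ring.inverse (1 - s)).comp W))) y⟫_ℂ =
      2 * (1 - c) * ⟪Ring.inverse (1 - adjoint t) (W x), Ring.inverse (1 - adjoint s) (W y)⟫_ℂ := by
  have hsum : (1 + t) * Ring.inverse (1 - t) + adjoint ((1 + s) * Ring.inverse (1 - s)) =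
      (2 * (1 - c)) • (Ring.inverse (1 - t) * Ring.inverse (1 - adjoint s)) := by
    rw [adjoint_cayley, one_add_mul_inverse_add_inverse_mul_one_add ht hs, hts]
    simp only [two_mul, two_smul, sub_smul, add_smul, smul_add, mul_sub, sub_mul, mul_one,
      smul_mul_assoc, mul_smul_comm]
  rw [adjoint_comp, adjoint_comp, adjoint_adjoint, ← comp_assoc, ← add_comp, ← comp_add, hsum]
  simp [← adjoint_inner_left, adjoint_inverse_one_sub]

end Operators

section RowContraction

variable {K : Type*} {ι : Type*} [NormedAddCommGroup K] [InnerProductSpace ℂ K] [CompleteSpace K]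
  [Fintype ι] (V : ι → K →L[ℂ] K)

lemma adjoint_sum_smul_adjoint (z : ι → ℂ) :
    adjoint (∑ i, z i • adjoint (V i)) = ∑ i, conj (z i) • V i := by
  simp [map_sum, LinearIsometryEquiv.map_smulₛₗ]

lemma sum_smul_adjoint_mul_adjoint_sum [DecidableEq ι]
    (hV : ∀ i j, adjoint (V i) * V j = if i = j then 1 else 0) (z z' : ι → ℂ) :
    (∑ i, z i • adjoint (V i)) * adjoint (∑ i, z' i • adjoint (V i)) =
      (∑ l, z l * conj (z' l)) • 1 := by
  rw [adjoint_sum_smul_adjoint, Finset.sum_mul_sum, Finset.sum_smul]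
  simp [hV, smul_smul, mul_comm]

lemma norm_sum_smul_adjoint_lt_one [DecidableEq ι]
    (hV : ∀ i j, adjoint (V i) * V j = if i = j then 1 else 0) {z : ι → ℂ}
    (hz : ∑ l, ‖z l‖ ^ 2 < 1) : ‖∑ i, z i • adjoint (V i)‖ < 1 := by
  set T := ∑ i, z i • adjoint (V i)
  have hT : ‖T‖ * ‖T‖ ≤ ∑ l, ‖z l‖ ^ 2 := by
    rw [← CStarRing.norm_self_mul_star, star_eq_adjoint, sum_smul_adjoint_mul_adjoint_sum V hV]
    calc ‖(∑ l, z l * conj (z l)) • (1 : K →L[ℂ] K)‖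
        ≤ ‖∑ l, z l * conj (z l)‖ * 1 := (norm_smul_le _ _).trans
          (mul_le_mul_of_nonneg_left norm_id_le (norm_nonneg _))
      _ = ∑ l, ‖z l‖ ^ 2 := by
        simp_rw [mul_one, Complex.mul_conj', ← Complex.ofReal_pow, ← Complex.ofReal_sum,
          Complex.norm_real]
        exact Real.norm_of_nonneg (by positivity)
  nlinarith [norm_nonneg T]

end RowContraction

/-- Let `V₁, …, V_n` be isometries with pairwise orthogonal ranges on `K`, `W : E → K`
bounded, and `F(z) := W*(I + ∑ zᵢVᵢ*)(I - ∑ zᵢVᵢ*)⁻¹ W` for `z ∈ 𝔹_n`.  Then for any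
points `w₁, …, w_m ∈ 𝔹_n` and vectors `h₁, …, h_m ∈ E`, the Pick-type sum
`∑_{i,j} ⟨(F(wᵢ) + F(wⱼ)*)/(1 - ⟨wᵢ, wⱼ⟩) hⱼ, hᵢ⟩` is a nonnegative real number. -/
theorem stmt18 {E K : Type*}
    [NormedAddCommGroup E] [InnerProductSpace ℂ E] [CompleteSpace E]
    [NormedAddCommGroup K] [InnerProductSpace ℂ K] [CompleteSpace K]
    {n m : ℕ} (V : Fin n → K →L[ℂ] K)
    (hV : ∀ i j : Fin n, adjoint (V i) * V j = if i = j then 1 else 0)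
    (W : E →L[ℂ] K)
    (w : Fin m → (Fin n → ℂ)) (hw : ∀ i, ∑ l, ‖w i l‖ ^ 2 < 1)
    (h : Fin m → E)
    (F : (Fin n → ℂ) → (E →L[ℂ] E))
    (hF : ∀ z : Fin n → ℂ, F z =
      (adjoint W).comp
        (((1 + ∑ i, z i • adjoint (V i)) *
            Ring.inverse (1 - ∑ i, z i • adjoint (V i))).comp W)) :
    0 ≤ (∑ i, ∑ j,
          (1 - ∑ l, w i l * (starRingEnd ℂ) (w j l))⁻¹ *
            (inner ℂ (h i) ((F (w i) + adjoint (F (w j))) (h j)) : ℂ)).re ∧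
    (∑ i, ∑ j,
          (1 - ∑ l, w i l * (starRingEnd ℂ) (w j l))⁻¹ *
            (inner ℂ (h i) ((F (w i) + adjoint (F (w j))) (h j)) : ℂ)).im = 0 := by
  have hT : ∀ i, ‖∑ l, w i l • adjoint (V l)‖ < 1 :=
    fun i => norm_sum_smul_adjoint_lt_one V hV (hw i)
  set g : Fin m → K := fun i => Ring.inverse (1 - adjoint (∑ l, w i l • adjoint (V l))) (W (h i))
  have entry : ∀ i j, (1 - ∑ l, w i l * conj (w j l))⁻¹ *
      ⟪h i, (F (w i) + adjoint (F (w j))) (h j)⟫_ℂ = 2 * ⟪g i, g j⟫_ℂ := by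
    intro i j
    have hc : 1 - ∑ l, w i l * conj (w j l) ≠ 0 := fun hc => by
      simpa [← sub_eq_zero.1 hc] using norm_sum_mul_conj_lt_one (hw i) (hw j)
    rw [hF, hF, inner_compression_cayley_add_adjoint_compression_cayley W
      (sum_smul_adjoint_mul_adjoint_sum V hV _ _) (isUnit_one_sub_of_norm_lt_one (hT i))
      (isUnit_one_sub_of_norm_lt_one (by rw [LinearIsometryEquiv.norm_map]; exact hT j))]
    field_simp
    rfl
  simp_rw [entry, ← Finset.mul_sum, sum_sum_inner_eq_norm_sum_sq]
  rw [← Complex.ofReal_ofNat, ← Complex.ofReal_mul, Complex.ofReal_re, Complex.ofReal_im]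
  exact ⟨by positivity, rfl⟩
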